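/- arXiv:1503.01317 — 6 statements merged into one kernel-verified Lean document; each statement's English description precedes it below -/
import Mathlib

section
/- Every nonempty locally compact metrizable topological space without isolated points contains a compact subset homeomorphic to the Cantor space ℕ → {0,1} (the countable product of two-point discrete spaces). -/
/-!
The closure of a relatively compact open set in a perfect space is a compact perfect set.
A nonempty compact metrizable perfect space is complete for any compatible metric, so the
Cantor scheme of `Perfect.exists_nat_bool_injection` gives a continuous injection of the Cantor
space into it, which is an embedding with compact image since the Cantor space is compact.
-/

open Set Topology

section

variable {X : Type*} [TopologicalSpace X]

theorem perfectSpace_of_interior_singleton_eq_empty (h : ∀ x : X, interior {x} = ∅) :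
    PerfectSpace X :=
  perfectSpace_iff_forall_not_isolated.2 fun x => ⟨fun hx =>
    dense_compl_singleton_iff_not_open.1 (interior_eq_empty_iff_dense_compl.1 (h x))
      ((isOpen_singleton_iff_punctured_nhds x).2 hx)⟩

theorem Perfect.perfectSpace {C : Set X} (hC : Perfect C) : PerfectSpace C := by
  refine ⟨preperfect_iff_nhds.2 fun x _ U hU => ?_⟩
  obtain ⟨V, hV, hVU⟩ := (mem_nhds_subtype C x U).1 hU
  obtain ⟨y, ⟨hyV, hyC⟩, hyx⟩ := preperfect_iff_nhds.1 hC.acc x x.2 V hV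
  exact ⟨⟨y, hyC⟩, ⟨hVU hyV, mem_univ _⟩, fun h => hyx (congrArg Subtype.val h)⟩

theorem exists_isCompact_perfect_nonempty [R1Space X] [WeaklyLocallyCompactSpace X]
    [PerfectSpace X] [Nonempty X] : ∃ K : Set X, IsCompact K ∧ Perfect K ∧ K.Nonempty := by
  obtain ⟨U, hU, hxU, hUc⟩ := exists_isOpen_mem_isCompact_closure (Classical.arbitrary X)
  exact ⟨closure U, hUc, hU.perfect_closure, ⟨_, subset_closure hxU⟩⟩

theorem exists_nat_bool_injection_of_perfectSpace (Y : Type*) [TopologicalSpace Y]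
    [TopologicalSpace.IsCompletelyMetrizableSpace Y] [PerfectSpace Y] [Nonempty Y] :
    ∃ f : (ℕ → Bool) → Y, Continuous f ∧ Function.Injective f := by
  let := TopologicalSpace.upgradeIsCompletelyMetrizable Y
  obtain ⟨f, -, hf⟩ := (PerfectSpace.univ_perfect (α := Y)).exists_nat_bool_injection univ_nonempty
  exact ⟨f, hf⟩

end

/-- Every nonempty locally compact metrizable space without isolated points contains a
compact subset homeomorphic to the Cantor space `ℕ → {0,1}`. -/
theorem exists_compact_homeomorph_cantor
    {X : Type*} [TopologicalSpace X] [LocallyCompactSpace X]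
    [TopologicalSpace.MetrizableSpace X] [Nonempty X]
    (hX : ∀ x : X, interior {x} = (∅ : Set X)) :
    ∃ K : Set X, IsCompact K ∧ Nonempty (K ≃ₜ (ℕ → Bool)) := by
  have := perfectSpace_of_interior_singleton_eq_empty hX
  obtain ⟨K, hK, hKperf, hKne⟩ := exists_isCompact_perfect_nonempty (X := X)
  have := isCompact_iff_compactSpace.mp hK
  have := hKperf.perfectSpace
  have := hKne.to_subtype
  -- any compatible metric on the compact space `K` is complete
  let := TopologicalSpace.metrizableSpaceMetric K
  obtain ⟨f, hf, hf_inj⟩ := exists_nat_bool_injection_of_perfectSpace K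
  have hemb : IsEmbedding (Subtype.val ∘ f) :=
    ((continuous_subtype_val.comp hf).isClosedEmbedding
      (Subtype.val_injective.comp hf_inj)).isEmbedding
  exact ⟨range (Subtype.val ∘ f), isCompact_range hemb.continuous, ⟨hemb.toHomeomorph.symm⟩⟩
end

section
/- Let β be a minimal, purely infinite action of a countable group Γ on a compact metrizable space X, and let n ∈ ℕ. Assume X satisfies the following covering-dimension condition: every finite open cover of X admits a finite open refinement (Y_j)_{j∈J} covering X (each Y_j contained in some member of the original cover) whose index set can be partitioned J = J_0 ⊔ J_1 ⊔ ⋯ ⊔ J_n such that for each k the sets (Y_j)_{j∈J_k} are pairwise disjoint. Then β has the weak (n+1)-filling property. -/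
open Set Filter Topology Pointwise

section HomeoMetric

variable {X : Type*} [MetricSpace X] [CompactSpace X]

/-- The metric `d(φ,ψ) = max_x d(φ x, ψ x) + max_x d(φ⁻¹ x, ψ⁻¹ x)` on the homeomorphism
group of a compact metric space. -/
noncomputable def homeoDist (φ ψ : X ≃ₜ X) : ℝ :=
  (⨆ x : X, dist (φ x) (ψ x)) + ⨆ x : X, dist (φ.symm x) (ψ.symm x)

/-- The topology on the homeomorphism group `H(X)` induced by the metric `homeoDist`. -/
noncomputable instance Homeomorph.metricTopology : TopologicalSpace (X ≃ₜ X) :=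
  TopologicalSpace.generateFrom
    {B | ∃ (φ : X ≃ₜ X) (ε : ℝ), B = {ψ : X ≃ₜ X | homeoDist φ ψ < ε}}

end HomeoMetric

section Actions

variable (Γ : Type*) [Group Γ] (X : Type*) [TopologicalSpace X]

/-- A family of homeomorphisms indexed by a group is an action if it is multiplicative:
`β (g * h) = β g ∘ β h`. -/
def IsAction (β : Γ → X ≃ₜ X) : Prop :=
  ∀ g h : Γ, β (g * h) = (β h).trans (β g)

/-- The space `H(Γ, X)` of actions of `Γ` on `X` by homeomorphisms, topologized as a
subspace of `∏_Γ H(X)`. -/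
abbrev ActionSpace := {β : Γ → X ≃ₜ X // IsAction Γ X β}

variable {Γ X}

/-- An action is minimal if every orbit is dense. -/
def IsMinimalAction (β : Γ → X ≃ₜ X) : Prop :=
  ∀ x : X, Dense (range fun g : Γ => β g x)

/-- An action is topologically free if the fixed point set of every nontrivial group
element has empty interior. -/
def IsTopFreeAction (β : Γ → X ≃ₜ X) : Prop :=
  ∀ s : Γ, s ≠ 1 → interior {x : X | β s x = x} = (∅ : Set X)

end Actions

/-- The space of probability measures on a countable discrete group `Γ`, with the topology
of pointwise convergence. -/
abbrev ProbMeas (Γ : Type*) := {μ : Γ → ℝ // (∀ g, 0 ≤ μ g) ∧ HasSum μ 1}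

/-- An action of a countable discrete group on a compact space is (topologically) amenable
if there is a sequence of continuous maps `μ_n : Z → Prob(Γ)` with
`sup_{z ∈ Z} ‖s • μ_n^z - μ_n^{s•z}‖₁ → 0` for every `s ∈ Γ`, where
`(s • μ)(g) = μ (s⁻¹ g)`. -/
def IsAmenableAction {Γ Z : Type*} [Group Γ] [TopologicalSpace Z] (α : Γ → Z ≃ₜ Z) : Prop :=
  ∃ μ : ℕ → Z → ProbMeas Γ,
    (∀ n, Continuous (μ n)) ∧
    ∀ s : Γ, Tendsto
      (fun n => ⨆ z : Z, ∑' g : Γ, |(μ n z).1 (s⁻¹ * g) - (μ n (α s z)).1 g|)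
      atTop (𝓝 0)

section SkewProduct

variable {Γ : Type*} [Group Γ] {Z Y G : Type*} [TopologicalSpace Z] [TopologicalSpace Y]
  [TopologicalSpace G] [Group G] [IsTopologicalGroup G] [MulAction G Y] [ContinuousSMul G Y]

/-- An action of a topological group on a space is minimal if every orbit is dense. -/
def IsMinimalSMul (G Y : Type*) [TopologicalSpace Y] [SMul G Y] : Prop :=
  ∀ y : Y, Dense (range fun g : G => g • y)

/-- An action of a group on a space has the `m`-filling property if every nonempty open set
has `m` group translates which cover the space. -/
def SMulFilling (G Y : Type*) [TopologicalSpace Y] [SMul G Y] (m : ℕ) : Prop :=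
  ∀ V : Set Y, IsOpen V → V.Nonempty → ∃ g : Fin m → G, (⋃ i, g i • V) = univ

/-- The homeomorphism `H(z, y) = (z, h_z • y)` of `Z × Y` associated with a continuous map
`h : Z → 𝒢`; the set of these is `𝒢_s`. -/
def skewHomeo (h : C(Z, G)) : (Z × Y) ≃ₜ (Z × Y) where
  toFun p := (p.1, h p.1 • p.2)
  invFun p := (p.1, (h p.1)⁻¹ • p.2)
  left_inv p := by simp
  right_inv p := by simp
  continuous_toFun :=
    continuous_fst.prodMk ((h.continuous.comp continuous_fst).smul continuous_snd)
  continuous_invFun :=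
    continuous_fst.prodMk (((h.continuous.comp continuous_fst).inv).smul continuous_snd)

/-- The diagonal action `ᾱ_s(z, y) = (α_s z, y)` on `Z × Y`. -/
def diagAction (α : Γ → Z ≃ₜ Z) (Y : Type*) [TopologicalSpace Y] (s : Γ) :
    (Z × Y) ≃ₜ (Z × Y) :=
  (α s).prodCongr (Homeomorph.refl Y)

/-- The set `S_𝒢(α)` of all conjugates `H⁻¹ ∘ ᾱ ∘ H` of the diagonal action `ᾱ` by
homeomorphisms `H ∈ 𝒢_s`. -/
def skewPerturbations (α : Γ → Z ≃ₜ Z) (Y G : Type*) [TopologicalSpace Y]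
    [TopologicalSpace G] [Group G] [IsTopologicalGroup G] [MulAction G Y]
    [ContinuousSMul G Y] : Set (Γ → (Z × Y) ≃ₜ (Z × Y)) :=
  {β | ∃ h : C(Z, G), β = fun s =>
    (skewHomeo h).trans ((diagAction α Y s).trans (skewHomeo h).symm)}

end SkewProduct

section Bisections

variable {Γ X : Type*} [Group Γ] [TopologicalSpace X]

/-- An open `β`-bisection: a family `V = (V_g)_{g ∈ Γ}` of open sets whose members are
pairwise disjoint and whose translates `β_g(V_g)` are pairwise disjoint.  (These correspond
to open `G`-sets of the transformation groupoid `X ⋊_β Γ`.) -/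
def IsOpenBisection (β : Γ → X ≃ₜ X) (V : Γ → Set X) : Prop :=
  (∀ g, IsOpen (V g)) ∧
  (∀ g h : Γ, g ≠ h → Disjoint (V g) (V h)) ∧
  (∀ g h : Γ, g ≠ h → Disjoint (β g '' V g) (β h '' V h))

/-- The source `s(V) = ∪_g V_g` of a bisection. -/
def bisectionSource (V : Γ → Set X) : Set X := ⋃ g : Γ, V g

/-- The range `r(V) = ∪_g β_g(V_g)` of a bisection. -/
def bisectionRange (β : Γ → X ≃ₜ X) (V : Γ → Set X) : Set X := ⋃ g : Γ, β g '' V g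

/-- `r(V W) = ∪_g β_g(V_g ∩ W)` for an open set `W`. -/
def bisectionRangeOn (β : Γ → X ≃ₜ X) (V : Γ → Set X) (W : Set X) : Set X :=
  ⋃ g : Γ, β g '' (V g ∩ W)

/-- The weak `n`-filling property of an action: for every nonempty open `W` there are `n`
open bisections `V¹, …, Vⁿ` with `∪ᵢ r(Vⁱ W) = X`. -/
def HasWeakFilling (β : Γ → X ≃ₜ X) (n : ℕ) : Prop :=
  ∀ W : Set X, IsOpen W → W.Nonempty →
    ∃ V : Fin n → Γ → Set X, (∀ i, IsOpenBisection β (V i)) ∧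
      (⋃ i, bisectionRangeOn β (V i) W) = univ

/-- Pure infiniteness of an action: every nonempty open `U` contains a nonempty open `V`
admitting two open bisections with ranges disjoint subsets of `V` and sources containing
`V`. -/
def IsPurelyInfiniteAction (β : Γ → X ≃ₜ X) : Prop :=
  ∀ U : Set X, IsOpen U → U.Nonempty →
    ∃ V : Set X, V ⊆ U ∧ IsOpen V ∧ V.Nonempty ∧
      ∃ B₁ B₂ : Γ → Set X, IsOpenBisection β B₁ ∧ IsOpenBisection β B₂ ∧
        bisectionRange β B₁ ⊆ V ∧ V ⊆ bisectionSource B₁ ∧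
        bisectionRange β B₂ ⊆ V ∧ V ⊆ bisectionSource B₂ ∧
        Disjoint (bisectionRange β B₁) (bisectionRange β B₂)

end Bisections

/-!
Pure infiniteness gives a nonempty open `V ⊆ W` and two open bisections mapping `V` into disjoint
subsets of itself; their words `B₁ᵏ B₂` are infinitely many bisections defined on `V` with pairwise
disjoint ranges inside `V`. By minimality and compactness finitely many translates `β_g⁻¹(V)` cover
`X`, and the dimension hypothesis refines this cover into `n + 1` colour classes of pairwise
disjoint open sets `Y_j`. Translating and inverting a separate word for each `j` turns `Y_j` into
the range of a bisection whose source lies in the range of that word, so the sources are pairwise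
disjoint subsets of `W`; gluing the bisections of each colour gives the `n + 1` bisections.
-/

open Function

namespace IsAction

variable {Γ X : Type*} [Group Γ] [TopologicalSpace X] {β : Γ → X ≃ₜ X}

lemma mul_apply (hact : IsAction Γ X β) (g h : Γ) (x : X) : β (g * h) x = β g (β h x) := by
  rw [hact g h]; rfl

lemma one_apply (hact : IsAction Γ X β) (x : X) : β 1 x = x :=
  (β 1).injective (by rw [← hact.mul_apply, mul_one])

lemma inv_eq_symm (hact : IsAction Γ X β) (g : Γ) : β g⁻¹ = (β g).symm := by
  ext x
  rw [Homeomorph.eq_symm_apply, ← hact.mul_apply, mul_inv_cancel, hact.one_apply]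

lemma image_mul (hact : IsAction Γ X β) (g h : Γ) (S : Set X) :
    β (g * h) '' S = β g '' (β h '' S) := by
  simp only [image_image, hact.mul_apply]

lemma image_inv_image (hact : IsAction Γ X β) (g : Γ) (S : Set X) :
    β g '' (β g⁻¹ '' S) = S := by
  rw [hact.inv_eq_symm]
  exact (β g).toEquiv.image_symm_image S

end IsAction

section Bisections

variable {Γ X : Type*} [TopologicalSpace X] {β : Γ → X ≃ₜ X}

namespace IsOpenBisection

variable {B : Γ → Set X}

lemma isOpen (hB : IsOpenBisection β B) (g : Γ) : IsOpen (B g) := hB.1 g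

lemma disjoint (hB : IsOpenBisection β B) {g h : Γ} (hgh : g ≠ h) : Disjoint (B g) (B h) :=
  hB.2.1 g h hgh

lemma disjoint_image (hB : IsOpenBisection β B) {g h : Γ} (hgh : g ≠ h) :
    Disjoint (β g '' B g) (β h '' B h) :=
  hB.2.2 g h hgh

lemma disjoint_bisectionRangeOn (hB : IsOpenBisection β B) {S T : Set X}
    (hST : Disjoint S T) : Disjoint (bisectionRangeOn β B S) (bisectionRangeOn β B T) := by
  simp only [bisectionRangeOn, disjoint_iUnion_left, disjoint_iUnion_right]
  intro h g
  rcases eq_or_ne g h with rfl | hgh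
  · exact (hST.mono inter_subset_right inter_subset_right).image (β g).injective.injOn
      (subset_univ _) (subset_univ _)
  · exact (hB.disjoint_image hgh).mono (image_mono inter_subset_left)
      (image_mono inter_subset_left)

end IsOpenBisection

omit [TopologicalSpace X] in
lemma subset_bisectionSource (B : Γ → Set X) (g : Γ) : B g ⊆ bisectionSource B :=
  subset_iUnion B g

lemma image_subset_bisectionRange (B : Γ → Set X) (g : Γ) :
    β g '' B g ⊆ bisectionRange β B :=
  subset_iUnion (fun g => β g '' B g) g

lemma bisectionRangeOn_subset_bisectionRange (B : Γ → Set X) (S : Set X) :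
    bisectionRangeOn β B S ⊆ bisectionRange β B :=
  iUnion_mono fun _ => image_mono inter_subset_left

lemma bisectionRangeOn_eq_bisectionRange {B : Γ → Set X} {W : Set X}
    (hBW : bisectionSource B ⊆ W) : bisectionRangeOn β B W = bisectionRange β B := by
  refine iUnion_congr fun g => ?_
  rw [inter_eq_left.2 ((subset_bisectionSource B g).trans hBW)]

lemma IsOpenBisection.iUnion {ι : Type*} {E : ι → Γ → Set X} (hE : ∀ j, IsOpenBisection β (E j))
    (hs : Pairwise (Disjoint on fun j => bisectionSource (E j)))
    (hr : Pairwise (Disjoint on fun j => bisectionRange β (E j))) :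
    IsOpenBisection β (fun g => ⋃ j, E j g) := by
  refine ⟨fun g => isOpen_iUnion fun j => (hE j).isOpen g, fun g h hgh => ?_, fun g h hgh => ?_⟩
  · simp only [disjoint_iUnion_left, disjoint_iUnion_right]
    intro j' j
    rcases eq_or_ne j j' with rfl | hjj
    · exact (hE j).disjoint hgh
    · exact (hs hjj).mono (subset_bisectionSource _ g) (subset_bisectionSource _ h)
  · simp only [image_iUnion, disjoint_iUnion_left, disjoint_iUnion_right]
    intro j' j
    rcases eq_or_ne j j' with rfl | hjj
    · exact (hE j).disjoint_image hgh
    · exact (hr hjj).mono (image_subset_bisectionRange _ g) (image_subset_bisectionRange _ h)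

omit [TopologicalSpace X] in
lemma bisectionSource_iUnion {ι : Type*} (E : ι → Γ → Set X) :
    bisectionSource (fun g => ⋃ j, E j g) = ⋃ j, bisectionSource (E j) :=
  iUnion_comm _

lemma bisectionRange_iUnion {ι : Type*} (E : ι → Γ → Set X) :
    bisectionRange β (fun g => ⋃ j, E j g) = ⋃ j, bisectionRange β (E j) := by
  simp only [bisectionRange, image_iUnion]
  exact iUnion_comm _

def bisectionRestrict (β : Γ → X ≃ₜ X) (B : Γ → Set X) (T : Set X) : Γ → Set X :=
  fun g => B g ∩ β g ⁻¹' T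

lemma IsOpenBisection.restrict {B : Γ → Set X} (hB : IsOpenBisection β B) {T : Set X}
    (hT : IsOpen T) : IsOpenBisection β (bisectionRestrict β B T) :=
  ⟨fun g => (hB.isOpen g).inter (hT.preimage (β g).continuous),
    fun _ _ hgh => (hB.disjoint hgh).mono inter_subset_left inter_subset_left,
    fun _ _ hgh => (hB.disjoint_image hgh).mono (image_mono inter_subset_left)
      (image_mono inter_subset_left)⟩

lemma bisectionSource_restrict_subset (B : Γ → Set X) (T : Set X) :
    bisectionSource (bisectionRestrict β B T) ⊆ bisectionSource B :=
  iUnion_mono fun _ => inter_subset_left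

lemma bisectionRange_restrict (B : Γ → Set X) (T : Set X) :
    bisectionRange β (bisectionRestrict β B T) = bisectionRange β B ∩ T := by
  simp only [bisectionRange, bisectionRestrict, image_inter_preimage, iUnion_inter]

variable [Group Γ]

def bisectionInv (β : Γ → X ≃ₜ X) (B : Γ → Set X) : Γ → Set X := fun g => β g⁻¹ '' B g⁻¹

lemma IsOpenBisection.inv (hact : IsAction Γ X β) {B : Γ → Set X} (hB : IsOpenBisection β B) :
    IsOpenBisection β (bisectionInv β B) := by
  refine ⟨fun g => (β g⁻¹).isOpenMap _ (hB.isOpen g⁻¹), fun g h hgh => ?_, fun g h hgh => ?_⟩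
  · exact hB.disjoint_image (inv_injective.ne hgh)
  · simp only [bisectionInv, hact.image_inv_image]
    exact hB.disjoint (inv_injective.ne hgh)

lemma bisectionSource_inv (B : Γ → Set X) :
    bisectionSource (bisectionInv β B) = bisectionRange β B :=
  inv_surjective.iUnion_comp fun g => β g '' B g

lemma bisectionRange_inv (hact : IsAction Γ X β) (B : Γ → Set X) :
    bisectionRange β (bisectionInv β B) = bisectionSource B := by
  simp only [bisectionRange, bisectionInv, hact.image_inv_image]
  exact inv_surjective.iUnion_comp B

def bisectionTranslate (g : Γ) (B : Γ → Set X) : Γ → Set X := fun h => B (g⁻¹ * h)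

lemma image_bisectionTranslate (hact : IsAction Γ X β) (g h : Γ) (B : Γ → Set X) :
    β h '' bisectionTranslate g B h = β g '' (β (g⁻¹ * h) '' B (g⁻¹ * h)) := by
  rw [bisectionTranslate, ← hact.image_mul, mul_inv_cancel_left]

lemma IsOpenBisection.translate (hact : IsAction Γ X β) (g : Γ) {B : Γ → Set X}
    (hB : IsOpenBisection β B) : IsOpenBisection β (bisectionTranslate g B) := by
  refine ⟨fun h => hB.isOpen _, fun h h' hne => hB.disjoint ((mul_right_injective _).ne hne),
    fun h h' hne => ?_⟩
  rw [image_bisectionTranslate hact, image_bisectionTranslate hact]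
  exact (hB.disjoint_image ((mul_right_injective _).ne hne)).image (β g).injective.injOn
    (subset_univ _) (subset_univ _)

omit [TopologicalSpace X] in
lemma bisectionSource_translate (g : Γ) (B : Γ → Set X) :
    bisectionSource (bisectionTranslate g B) = bisectionSource B :=
  (mul_left_surjective g⁻¹).iUnion_comp B

lemma bisectionRange_translate (hact : IsAction Γ X β) (g : Γ) (B : Γ → Set X) :
    bisectionRange β (bisectionTranslate g B) = β g '' bisectionRange β B := by
  simp only [bisectionRange, image_bisectionTranslate hact, image_iUnion]
  exact (mul_left_surjective g⁻¹).iUnion_comp fun h => β g '' (β h '' B h)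

/-- `B ∘ C`: first `C`, then `B`. -/
def bisectionComp (β : Γ → X ≃ₜ X) (B C : Γ → Set X) : Γ → Set X :=
  fun g => ⋃ h, C h ∩ β h ⁻¹' B (g * h⁻¹)

lemma mem_bisectionComp {B C : Γ → Set X} {g : Γ} {x : X} :
    x ∈ bisectionComp β B C g ↔ ∃ h, x ∈ C h ∧ β h x ∈ B (g * h⁻¹) := by
  simp [bisectionComp]

lemma IsOpenBisection.comp (hact : IsAction Γ X β) {B C : Γ → Set X}
    (hB : IsOpenBisection β B) (hC : IsOpenBisection β C) :
    IsOpenBisection β (bisectionComp β B C) := by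
  refine ⟨fun g => isOpen_iUnion fun h => (hC.isOpen h).inter
    ((hB.isOpen _).preimage (β h).continuous), fun g g' hgg => ?_, fun g g' hgg => ?_⟩
  · refine disjoint_left.2 fun x hx hx' => ?_
    obtain ⟨h, hxC, hxB⟩ := mem_bisectionComp.1 hx
    obtain ⟨h', hxC', hxB'⟩ := mem_bisectionComp.1 hx'
    rcases eq_or_ne h h' with rfl | hh
    · exact disjoint_left.1 (hB.disjoint ((mul_left_injective _).ne hgg)) hxB hxB'
    · exact disjoint_left.1 (hC.disjoint hh) hxC hxC'
  · refine disjoint_left.2 ?_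
    rintro _ ⟨x, hx, rfl⟩ ⟨x', hx', hxx⟩
    obtain ⟨h, hxC, hxB⟩ := mem_bisectionComp.1 hx
    obtain ⟨h', hxC', hxB'⟩ := mem_bisectionComp.1 hx'
    have factor : ∀ k l (y : X), β k y = β (k * l⁻¹) (β l y) := fun k l y => by
      rw [← hact.mul_apply, inv_mul_cancel_right]
    rw [factor g h, factor g' h'] at hxx
    by_cases hk : g * h⁻¹ = g' * h'⁻¹
    · rw [hk] at hxx
      have hh : h ≠ h' := fun e => hgg (by simpa [e] using hk)
      exact disjoint_left.1 (hC.disjoint_image hh) ⟨x, hxC, rfl⟩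
        ⟨x', hxC', (β _).injective hxx⟩
    · exact disjoint_left.1 (hB.disjoint_image hk) ⟨_, hxB, rfl⟩ ⟨_, hxB', hxx⟩

lemma bisectionRange_comp_subset (hact : IsAction Γ X β) (B C : Γ → Set X) :
    bisectionRange β (bisectionComp β B C) ⊆ bisectionRangeOn β B (bisectionRange β C) := by
  refine iUnion_subset fun g => ?_
  rintro _ ⟨x, hx, rfl⟩
  obtain ⟨h, hxC, hxB⟩ := mem_bisectionComp.1 hx
  refine mem_iUnion.2 ⟨g * h⁻¹, β h x, ⟨hxB, image_subset_bisectionRange C h ⟨x, hxC, rfl⟩⟩, ?_⟩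
  rw [← hact.mul_apply, inv_mul_cancel_right]

lemma bisectionSource_subset_comp {B C : Γ → Set X}
    (hCB : bisectionRange β C ⊆ bisectionSource B) :
    bisectionSource C ⊆ bisectionSource (bisectionComp β B C) := by
  intro x hx
  obtain ⟨h, hxC⟩ := mem_iUnion.1 hx
  obtain ⟨g, hxB⟩ := mem_iUnion.1 (hCB (image_subset_bisectionRange C h ⟨x, hxC, rfl⟩))
  exact mem_iUnion.2 ⟨g * h, mem_bisectionComp.2 ⟨h, hxC, by rwa [mul_inv_cancel_right]⟩⟩

def IsOpenBisectionOn (β : Γ → X ≃ₜ X) (U : Set X) (B : Γ → Set X) : Prop :=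
  IsOpenBisection β B ∧ U ⊆ bisectionSource B ∧ bisectionRange β B ⊆ U

lemma IsOpenBisectionOn.comp (hact : IsAction Γ X β) {U : Set X} {B C : Γ → Set X}
    (hB : IsOpenBisectionOn β U B) (hC : IsOpenBisectionOn β U C) :
    IsOpenBisectionOn β U (bisectionComp β B C) :=
  ⟨hB.1.comp hact hC.1, hC.2.1.trans (bisectionSource_subset_comp (hC.2.2.trans hB.2.1)),
    (bisectionRange_comp_subset hact B C).trans
      ((bisectionRangeOn_subset_bisectionRange B _).trans hB.2.2)⟩

/-- The words `B₁ᵏ ∘ B₂`, which, like the isometries `s₁ᵏ s₂` of the Cuntz algebra `𝒪₂`, have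
pairwise disjoint ranges when `B₁` and `B₂` do. -/
def bisectionPowComp (β : Γ → X ≃ₜ X) (B₁ B₂ : Γ → Set X) : ℕ → Γ → Set X
  | 0 => B₂
  | k + 1 => bisectionComp β B₁ (bisectionPowComp β B₁ B₂ k)

lemma IsOpenBisectionOn.powComp (hact : IsAction Γ X β) {U : Set X} {B₁ B₂ : Γ → Set X}
    (h₁ : IsOpenBisectionOn β U B₁) (h₂ : IsOpenBisectionOn β U B₂) :
    ∀ k, IsOpenBisectionOn β U (bisectionPowComp β B₁ B₂ k)
  | 0 => h₂
  | k + 1 => h₁.comp hact (h₁.powComp hact h₂ k)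

lemma disjoint_bisectionRange_powComp (hact : IsAction Γ X β) {B₁ B₂ : Γ → Set X}
    (hB₁ : IsOpenBisection β B₁) (hB : Disjoint (bisectionRange β B₁) (bisectionRange β B₂)) :
    Pairwise (Disjoint on fun k => bisectionRange β (bisectionPowComp β B₁ B₂ k))
  | 0, 0, h => absurd rfl h
  | 0, _ + 1, _ => hB.symm.mono_right ((bisectionRange_comp_subset hact _ _).trans
      (bisectionRangeOn_subset_bisectionRange _ _))
  | _ + 1, 0, _ => hB.mono_left ((bisectionRange_comp_subset hact _ _).trans
      (bisectionRangeOn_subset_bisectionRange _ _))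
  | _ + 1, _ + 1, h => (hB₁.disjoint_bisectionRangeOn
      (disjoint_bisectionRange_powComp hact hB₁ hB (fun e => h (congrArg _ e)))).mono
      (bisectionRange_comp_subset hact _ _) (bisectionRange_comp_subset hact _ _)

lemma IsOpenBisection.exists_range_eq_of_subset_preimage (hact : IsAction Γ X β)
    {D : Γ → Set X} (hD : IsOpenBisection β D) {g : Γ} {Y : Set X} (hY : IsOpen Y)
    (hYD : Y ⊆ β g ⁻¹' bisectionSource D) :
    ∃ E, IsOpenBisection β E ∧ bisectionSource E ⊆ bisectionRange β D ∧
      bisectionRange β E = Y := by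
  refine ⟨bisectionRestrict β (bisectionTranslate g⁻¹ (bisectionInv β D)) Y,
    ((hD.inv hact).translate hact g⁻¹).restrict hY, ?_, ?_⟩
  · exact (bisectionSource_restrict_subset _ Y).trans_eq
      (by rw [bisectionSource_translate, bisectionSource_inv])
  · rw [bisectionRange_restrict, bisectionRange_translate hact, bisectionRange_inv hact,
      inter_eq_right, hact.inv_eq_symm, Homeomorph.image_symm]
    exact hYD

end Bisections

lemma IsMinimalAction.exists_fin_iUnion_preimage_eq_univ {Γ X : Type*} [TopologicalSpace X]
    [CompactSpace X] {β : Γ → X ≃ₜ X} (hmin : IsMinimalAction β) {V : Set X} (hV : IsOpen V)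
    (hVne : V.Nonempty) : ∃ (m : ℕ) (g : Fin m → Γ), ⋃ i, β (g i) ⁻¹' V = univ := by
  obtain ⟨t, ht⟩ := isCompact_univ.elim_finite_subcover (fun g => β g ⁻¹' V)
    (fun g => hV.preimage (β g).continuous) fun x _ => by
      obtain ⟨_, ⟨g, rfl⟩, hg⟩ := (hmin x).exists_mem_open hV hVne
      exact mem_iUnion.2 ⟨g, hg⟩
  refine ⟨t.card, fun i => t.equivFin.symm i, eq_univ_of_univ_subset fun x hx => ?_⟩
  obtain ⟨g, hg, hxg⟩ := mem_iUnion₂.1 (ht hx)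
  exact mem_iUnion.2 ⟨t.equivFin ⟨g, hg⟩, by simpa using hxg⟩

lemma exists_bisections_iUnion_rangeOn_eq_univ {Γ X J κ : Type*} [TopologicalSpace X]
    {β : Γ → X ≃ₜ X} {W : Set X} (c : J → κ) {E : J → Γ → Set X}
    (hE : ∀ j, IsOpenBisection β (E j))
    (hs : Pairwise (Disjoint on fun j => bisectionSource (E j)))
    (hr : ∀ j j', j ≠ j' → c j = c j' →
      Disjoint (bisectionRange β (E j)) (bisectionRange β (E j')))
    (hEW : ∀ j, bisectionSource (E j) ⊆ W) (hcov : ⋃ j, bisectionRange β (E j) = univ) :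
    ∃ V : κ → Γ → Set X, (∀ i, IsOpenBisection β (V i)) ∧
      ⋃ i, bisectionRangeOn β (V i) W = univ := by
  refine ⟨fun i g => ⋃ j : {j // c j = i}, E j g, fun i => IsOpenBisection.iUnion (fun j => hE j)
    (hs.comp_of_injective Subtype.coe_injective)
    (fun j j' h => hr j j' (Subtype.coe_injective.ne h) (j.2.trans j'.2.symm)), ?_⟩
  refine eq_univ_of_univ_subset (hcov ▸ iUnion_subset fun j => ?_)
  refine subset_iUnion_of_subset (c j) ?_
  rw [bisectionRangeOn_eq_bisectionRange (by
    rw [bisectionSource_iUnion]; exact iUnion_subset fun j => hEW j), bisectionRange_iUnion]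
  exact subset_iUnion_of_subset ⟨j, rfl⟩ subset_rfl

theorem weak_filling_of_purelyInfinite_minimal_general
    {Γ X : Type*} [Group Γ]
    [TopologicalSpace X] [CompactSpace X]
    (β : Γ → X ≃ₜ X) (hact : IsAction Γ X β)
    (hmin : IsMinimalAction β) (hpi : IsPurelyInfiniteAction β) (n : ℕ)
    (hdim : ∀ (ι : Type) [Fintype ι] (U : ι → Set X),
      (∀ i, IsOpen (U i)) → (⋃ i, U i) = univ →
      ∃ (J : Type) (_ : Fintype J) (Y : J → Set X) (c : J → Fin (n + 1)) (f : J → ι),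
        (∀ j, IsOpen (Y j)) ∧ (⋃ j, Y j) = univ ∧ (∀ j, Y j ⊆ U (f j)) ∧
        ∀ j j' : J, j ≠ j' → c j = c j' → Disjoint (Y j) (Y j')) :
    HasWeakFilling β (n + 1) := by
  intro W hW hWne
  obtain ⟨V, hVW, hV, hVne, B₁, B₂, hB₁, hB₂, hr₁, hs₁, hr₂, hs₂, hB⟩ := hpi W hW hWne
  obtain ⟨m, g, hg⟩ := hmin.exists_fin_iUnion_preimage_eq_univ hV hVne
  obtain ⟨J, _, Y, c, f, hYo, hYcov, hYg, hYc⟩ :=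
    hdim (Fin m) (fun i => β (g i) ⁻¹' V) (fun i => hV.preimage (β (g i)).continuous) hg
  obtain ⟨e, he⟩ := exists_injective_nat J
  have hD := IsOpenBisectionOn.powComp hact ⟨hB₁, hs₁, hr₁⟩ ⟨hB₂, hs₂, hr₂⟩
  choose E hE hEs hEr using fun j => (hD (e j)).1.exists_range_eq_of_subset_preimage hact
    (hYo j) ((hYg j).trans (preimage_mono (hD (e j)).2.1))
  refine exists_bisections_iUnion_rangeOn_eq_univ c hE
    (fun j j' h => (disjoint_bisectionRange_powComp hact hB₁ hB (he.ne h)).mono (hEs j) (hEs j'))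
    (fun j j' h hc => by rw [hEr, hEr]; exact hYc j j' h hc)
    (fun j => (hEs j).trans ((hD (e j)).2.2.trans hVW)) ?_
  simp only [hEr, hYcov]

/-- **Filling from pure infiniteness.**  A minimal purely infinite action of a countable
group on a compact metrizable (infinite) space whose covering dimension is at most `n`
(expressed by the refinement condition below) has the weak `(n+1)`-filling property. -/
theorem weak_filling_of_purelyInfinite_minimal
    {Γ X : Type*} [Group Γ] [Countable Γ]
    [TopologicalSpace X] [CompactSpace X] [TopologicalSpace.MetrizableSpace X] [Infinite X]
    (β : Γ → X ≃ₜ X) (hact : IsAction Γ X β)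
    (hmin : IsMinimalAction β) (hpi : IsPurelyInfiniteAction β) (n : ℕ)
    (hdim : ∀ (ι : Type) [Fintype ι] (U : ι → Set X),
      (∀ i, IsOpen (U i)) → (⋃ i, U i) = univ →
      ∃ (J : Type) (_ : Fintype J) (Y : J → Set X) (c : J → Fin (n + 1)) (f : J → ι),
        (∀ j, IsOpen (Y j)) ∧ (⋃ j, Y j) = univ ∧ (∀ j, Y j ⊆ U (f j)) ∧
        ∀ j j' : J, j ≠ j' → c j = c j' → Disjoint (Y j) (Y j')) :
    HasWeakFilling β (n + 1) :=
  weak_filling_of_purelyInfinite_minimal_general β hact hmin hpi n hdim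
end

section
/- Let β be an action of a countable group Γ on a compact metrizable space X having the weak n-filling property for some n ∈ ℕ. Then β is minimal, i.e., every β-orbit is dense in X. -/
open Set Filter Topology Pointwise

section WeakFilling

variable {Γ X : Type*} [TopologicalSpace X] {β : Γ → X ≃ₜ X}

theorem IsAction.apply_one [Group Γ] (hact : IsAction Γ X β) (x : X) : β 1 x = x := by
  have h : β 1 (β 1 x) = β 1 x := by
    rw [← Homeomorph.trans_apply, ← hact, one_mul]
  exact (β 1).injective h

theorem IsAction.apply_inv_apply [Group Γ] (hact : IsAction Γ X β) (g : Γ) (x : X) :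
    β g⁻¹ (β g x) = x := by
  rw [← Homeomorph.trans_apply, ← hact, inv_mul_cancel, hact.apply_one]

theorem HasWeakFilling.exists_apply_eq {n : ℕ} (hfill : HasWeakFilling β n) {W : Set X}
    (hW : IsOpen W) (hne : W.Nonempty) (x : X) : ∃ g, ∃ y ∈ W, β g y = x := by
  obtain ⟨V, -, hcov⟩ := hfill W hW hne
  have hx : x ∈ ⋃ i, bisectionRangeOn β (V i) W := hcov ▸ mem_univ x
  simp only [bisectionRangeOn, mem_iUnion, mem_image] at hx
  obtain ⟨-, g, y, ⟨-, hyW⟩, rfl⟩ := hx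
  exact ⟨g, y, hyW, rfl⟩

end WeakFilling

theorem minimal_of_hasWeakFilling_general
    {Γ X : Type*} [Group Γ]
    [TopologicalSpace X]
    (β : Γ → X ≃ₜ X) (hact : IsAction Γ X β)
    (n : ℕ) (hfill : HasWeakFilling β n) :
    IsMinimalAction β := by
  intro x
  rw [dense_iff_inter_open]
  intro U hU hUne
  obtain ⟨g, y, hyU, rfl⟩ := hfill.exists_apply_eq hU hUne x
  exact ⟨y, hyU, g⁻¹, hact.apply_inv_apply g y⟩

/-- The weak `n`-filling property implies minimality: every orbit is dense. -/
theorem minimal_of_hasWeakFilling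
    {Γ X : Type*} [Group Γ] [Countable Γ]
    [TopologicalSpace X] [CompactSpace X] [TopologicalSpace.MetrizableSpace X]
    (β : Γ → X ≃ₜ X) (hact : IsAction Γ X β)
    (n : ℕ) (hfill : HasWeakFilling β n) :
    IsMinimalAction β :=
  minimal_of_hasWeakFilling_general β hact n hfill
end

section
/- Let Γ be a countable group acting on a compact metric space X, let U ⊆ X be a nonempty open set, and let N ∈ ℕ. Then the set F_U := {β ∈ H(Γ,X) : there exist N open β-bisections V¹,…,V^N with ∪_{i=1}^N r(Vⁱ U) = X} is open in H(Γ,X). -/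
open Set Filter Topology Pointwise

/-!
The sets `β_g(Vⁱ_g ∩ U)` form an open cover of the compact space `X`. Shrink it to a cover by
open sets `w_{i,g}`, only finitely many nonempty, that has a Lebesgue number `ε` and whose
`ε`-thickenings stay inside the original cover. If `β'_g` is `ε`-close to `β_g` for the finitely
many `g` involved, the sets `β_g⁻¹(w_{i,g})` form open `β'`-bisections: `β'_g` moves them into the
`ε`-thickening of `w_{i,g}`, which lies in `β_g(Vⁱ_g)`, so the disjointness of ranges is inherited
from `Vⁱ`, and every `x` is hit because `β_g(β'_g⁻¹ x)` lies in the `ε`-ball around `x`.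
-/

open Metric

section HomeoDist

variable {X : Type*} [MetricSpace X]

lemma dist_le_homeoDist [CompactSpace X] (φ ψ : X ≃ₜ X) (x : X) :
    dist (φ x) (ψ x) ≤ homeoDist φ ψ :=
  calc dist (φ x) (ψ x) ≤ ⨆ x, dist (φ x) (ψ x) :=
        le_ciSup (isCompact_range (φ.continuous.dist ψ.continuous)).bddAbove x
    _ ≤ homeoDist φ ψ := le_add_of_nonneg_right (Real.iSup_nonneg fun _ => dist_nonneg)

lemma homeoDist_self (φ : X ≃ₜ X) : homeoDist φ φ = 0 := by
  simp [homeoDist]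

lemma isOpen_setOf_homeoDist_lt (φ : X ≃ₜ X) (ε : ℝ) :
    IsOpen {ψ : X ≃ₜ X | homeoDist φ ψ < ε} :=
  TopologicalSpace.isOpen_generateFrom_of_mem ⟨φ, ε, rfl⟩

lemma isOpen_setOf_forall_homeoDist_lt {Γ : Type*} [Group Γ] (β : Γ → X ≃ₜ X) {S : Set Γ}
    (hS : S.Finite) (ε : ℝ) :
    IsOpen {β' : ActionSpace Γ X | ∀ g ∈ S, homeoDist (β g) (β'.1 g) < ε} := by
  simp only [ofPred_forall]
  refine hS.isOpen_biInter fun g _ => (isOpen_setOf_homeoDist_lt (β g) ε).preimage ?_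
  exact (continuous_apply g).comp continuous_subtype_val

end HomeoDist

theorem exists_uniform_shrinking {ι X : Type*} [MetricSpace X] [CompactSpace X]
    {f : ι → Set X} (hf : ∀ i, IsOpen (f i)) (hcov : ⋃ i, f i = univ) :
    ∃ ε > 0, ∃ w : ι → Set X, (∀ i, IsOpen (w i)) ∧ (∀ i, thickening ε (w i) ⊆ f i) ∧
      (∀ x, ∃ i, ball x ε ⊆ w i) ∧ {i | (w i).Nonempty}.Finite := by
  obtain ⟨η, hη, hleb⟩ := lebesgue_number_lemma_of_metric isCompact_univ hf hcov.ge
  choose c hc using fun x => hleb x (mem_univ x)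
  obtain ⟨t, -, ht, htcov⟩ := finite_cover_balls_of_compact (isCompact_univ (X := X))
    (by positivity : 0 < η / 4)
  -- `η` is a Lebesgue number of `f` and `t` an `η / 4`-net; `w i` gathers the `η / 2`-balls
  -- around the points of `t` whose `η`-ball lies in `f i`.
  refine ⟨η / 4, by positivity, fun i => ⋃ x ∈ t ∩ c ⁻¹' {i}, ball x (η / 2),
    fun i => isOpen_biUnion fun _ _ => isOpen_ball, ?_, ?_, ?_⟩
  · intro i y hy
    obtain ⟨z, hz, hyz⟩ := mem_thickening_iff.1 hy
    obtain ⟨x, ⟨-, rfl⟩, hzx⟩ := mem_iUnion₂.1 hz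
    refine hc x (mem_ball.2 ?_)
    linarith [dist_triangle y z x, mem_ball.1 hzx]
  · intro y
    obtain ⟨x, hxt, hyx⟩ := mem_iUnion₂.1 (htcov (mem_univ y))
    refine ⟨c x, (ball_subset_ball' ?_).trans
      (subset_biUnion_of_mem (u := fun x => ball x (η / 2)) ⟨hxt, rfl⟩)⟩
    linarith [mem_ball.1 hyx]
  · refine (ht.image c).subset ?_
    rintro i ⟨z, hz⟩
    obtain ⟨x, ⟨hxt, hxi⟩, -⟩ := mem_iUnion₂.1 hz
    exact ⟨x, hxt, hxi⟩

section Perturbation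

variable {X : Type*} [PseudoMetricSpace X] {φ ψ : X ≃ₜ X} {ε : ℝ}

lemma image_preimage_subset_thickening (h : ∀ z, dist (ψ z) (φ z) < ε) (w : Set X) :
    ψ '' (φ ⁻¹' w) ⊆ thickening ε w := by
  rintro _ ⟨z, hz, rfl⟩
  exact mem_thickening_iff.2 ⟨φ z, hz, h z⟩

lemma mem_image_preimage_of_ball_subset (h : ∀ z, dist (ψ z) (φ z) < ε) {w : Set X} {x : X}
    (hx : ball x ε ⊆ w) : x ∈ ψ '' (φ ⁻¹' w) := by
  refine ⟨ψ.symm x, hx ?_, ψ.apply_symm_apply x⟩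
  simpa [mem_ball, dist_comm] using h (ψ.symm x)

end Perturbation

lemma IsOpenBisection.of_subset {Γ X : Type*} [Group Γ] [TopologicalSpace X]
    {β β' : Γ → X ≃ₜ X} {V W : Γ → Set X} (hV : IsOpenBisection β V) (hW : ∀ g, IsOpen (W g))
    (hsub : ∀ g, W g ⊆ V g) (himage : ∀ g, β' g '' W g ⊆ β g '' V g) :
    IsOpenBisection β' W :=
  ⟨hW, fun g h hgh => (hV.2.1 g h hgh).mono (hsub g) (hsub h),
    fun g h hgh => (hV.2.2 g h hgh).mono (himage g) (himage h)⟩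

theorem isOpen_F_U_general
    {Γ X : Type*} [Group Γ] [MetricSpace X] [CompactSpace X]
    (U : Set X) (hU : IsOpen U) (N : ℕ) :
    IsOpen {β : ActionSpace Γ X |
      ∃ V : Fin N → Γ → Set X, (∀ i, IsOpenBisection β.1 (V i)) ∧
        (⋃ i, bisectionRangeOn β.1 (V i) U) = univ} := by
  rw [isOpen_iff_forall_mem_open]
  rintro β ⟨V, hV, hcov⟩
  obtain ⟨ε, hε, w, hw_open, hw_thick, hw_leb, hw_fin⟩ :=
    exists_uniform_shrinking (f := fun p : Fin N × Γ => β.1 p.2 '' (V p.1 p.2 ∩ U))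
      (fun p => (β.1 p.2).isOpenMap _ (((hV p.1).1 p.2).inter hU))
      (by rw [← hcov, iUnion_prod']; rfl)
  refine ⟨_, ?_, isOpen_setOf_forall_homeoDist_lt β.1 (hw_fin.image Prod.snd) ε,
    fun g _ => by rwa [homeoDist_self]⟩
  intro β' hβ'
  have hclose : ∀ i g, (w (i, g)).Nonempty → ∀ z, dist (β'.1 g z) (β.1 g z) < ε :=
    fun i g hne z => (dist_comm _ _).trans_lt
      ((dist_le_homeoDist _ _ z).trans_lt (hβ' g ⟨(i, g), hne, rfl⟩))
  have hsub : ∀ i g, β.1 g ⁻¹' w (i, g) ⊆ V i g ∩ U := fun i g => by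
    rw [← (β.1 g).preimage_image (V i g ∩ U)]
    exact preimage_mono ((self_subset_thickening hε _).trans (hw_thick _))
  have himage : ∀ i g, β'.1 g '' (β.1 g ⁻¹' w (i, g)) ⊆ β.1 g '' (V i g ∩ U) := by
    intro i g
    rcases (w (i, g)).eq_empty_or_nonempty with hempty | hne
    · simp [hempty]
    · exact (image_preimage_subset_thickening (hclose i g hne) _).trans (hw_thick _)
  refine ⟨fun i g => β.1 g ⁻¹' w (i, g), fun i => (hV i).of_subset
    (fun g => (hw_open _).preimage (β.1 g).continuous)
    (fun g => (hsub i g).trans inter_subset_left)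
    (fun g => (himage i g).trans (image_mono inter_subset_left)), eq_univ_of_forall fun x => ?_⟩
  obtain ⟨⟨i, g⟩, hx⟩ := hw_leb x
  have hxy := mem_image_preimage_of_ball_subset (hclose i g ⟨x, hx (mem_ball_self hε)⟩) hx
  rw [← inter_eq_left.2 (hsub i g |>.trans inter_subset_right)] at hxy
  exact mem_iUnion₂.2 ⟨i, g, hxy⟩

/-- For a nonempty open `U ⊆ X` and `N ∈ ℕ`, the set
`F_U = {β ∈ H(Γ,X) : ∃ N open β-bisections V¹,…,V^N with ∪ᵢ r(Vⁱ U) = X}` is open in the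
space of actions `H(Γ, X)`. -/
theorem isOpen_F_U
    {Γ X : Type*} [Group Γ] [Countable Γ] [MetricSpace X] [CompactSpace X]
    (U : Set X) (hU : IsOpen U) (hUne : U.Nonempty) (N : ℕ) :
    IsOpen {β : ActionSpace Γ X |
      ∃ V : Fin N → Γ → Set X, (∀ i, IsOpenBisection β.1 (V i)) ∧
        (⋃ i, bisectionRangeOn β.1 (V i) U) = univ} :=
  isOpen_F_U_general U hU N
end

section
/- Let M be a nonempty connected closed topological n-manifold. Then there exists N ∈ ℕ such that for every nonempty open set V ⊆ M there exist homeomorphisms h_1,…,h_N of M, each isotopic to the identity, with ∪_{i=1}^N h_i(V) = M. (In other words, the action of the identity path component H_0(M) of the homeomorphism group of M on M has the finite filling property.) -/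
/-!
Cover `M` by finitely many unit balls of centred charts; `N` is their number. It then suffices to
find, for every such ball `B` and every nonempty open `V`, a homeomorphism `h` isotopic to the
identity with `B ⊆ h V`.

If `g` is a compactly supported map of `ℝⁿ` with Lipschitz constant `< 1`, then `id + g` is a
homeomorphism, isotopic to the identity through `id + t • g`, and transported through a chart and
extended by the identity it gives such a homeomorphism of `M`. Taking for `g` a cut-off
translation shows that points of a chart ball can be moved to its centre and back, so by
connectedness the isotopies act transitively and `V` can be moved onto the centre of `B`. Taking
for `g` a cut-off multiple of the identity expands the unit ball radially by `6/5`, and finitely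
many expansions blow a small ball around the centre up to `B`.
-/

open Set Topology

open unitInterval in
/-- A homeomorphism `h` of a space `M` is isotopic to the identity if there is a continuous
map `F : [0,1] × M → M` such that each `F(t, ·)` is a homeomorphism of `M`, `F(0, ·) = id`
and `F(1, ·) = h`. -/
def IsotopicToId {M : Type*} [TopologicalSpace M] (h : M ≃ₜ M) : Prop :=
  ∃ F : I × M → M, Continuous F ∧
    (∀ t : I, ∃ e : M ≃ₜ M, (⇑e : M → M) = fun x => F (t, x)) ∧
    (∀ x : M, F (0, x) = x) ∧ (∀ x : M, F (1, x) = h x)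

open Metric unitInterval NNReal

namespace IsotopicToId

variable {M : Type*} [TopologicalSpace M]

theorem refl : IsotopicToId (Homeomorph.refl M) :=
  ⟨Prod.snd, continuous_snd, fun _ => ⟨Homeomorph.refl M, rfl⟩, fun _ => rfl, fun _ => rfl⟩

theorem trans {h₁ h₂ : M ≃ₜ M} (H₁ : IsotopicToId h₁) (H₂ : IsotopicToId h₂) :
    IsotopicToId (h₁.trans h₂) := by
  obtain ⟨F₁, hF₁, hslice₁, h₀₁, h₁₁⟩ := H₁
  obtain ⟨F₂, hF₂, hslice₂, h₀₂, h₁₂⟩ := H₂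
  refine ⟨fun p => F₂ (p.1, F₁ p), hF₂.comp (continuous_fst.prodMk hF₁), fun t => ?_,
    fun x => by simp only [h₀₁, h₀₂], fun x => by simp only [h₁₁, h₁₂, Homeomorph.trans_apply]⟩
  obtain ⟨e₁, he₁⟩ := hslice₁ t
  obtain ⟨e₂, he₂⟩ := hslice₂ t
  exact ⟨e₁.trans e₂, funext fun x => by simp only [Homeomorph.trans_apply, he₁, he₂]⟩

end IsotopicToId

section ChartExtend

variable {X Y : Type*} [TopologicalSpace X] [TopologicalSpace Y] {U : Set X}

noncomputable def chartExtend (φ : U ≃ₜ Y) (f : Y → Y) (x : X) : X :=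
  open Classical in if hx : x ∈ U then φ.symm (f (φ ⟨x, hx⟩)) else x

variable (φ : U ≃ₜ Y)

@[simp]
theorem chartExtend_coe (f : Y → Y) (u : U) : chartExtend φ f u = φ.symm (f (φ u)) := by
  simp [chartExtend]

theorem chartExtend_of_notMem (f : Y → Y) {x : X} (hx : x ∉ U) : chartExtend φ f x = x := by
  simp [chartExtend, hx]

theorem chartExtend_id : chartExtend φ id = (id : X → X) := by
  funext x
  by_cases hx : x ∈ U
  · simp [chartExtend, hx]
  · exact chartExtend_of_notMem φ id hx

theorem chartExtend_comp (f g : Y → Y) :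
    chartExtend φ f ∘ chartExtend φ g = chartExtend φ (f ∘ g) := by
  funext x
  by_cases hx : x ∈ U
  · lift x to U using hx
    simp
  · simp [chartExtend_of_notMem φ _ hx]

variable [T2Space X]

theorem continuous_chartExtend_param {Z : Type*} [TopologicalSpace Z] (hU : IsOpen U)
    {F : Z × Y → Y} (hF : Continuous F) {K : Set Y} (hK : IsCompact K)
    (hFK : ∀ t, ∀ y ∉ K, F (t, y) = y) :
    Continuous fun p : Z × X => chartExtend φ (fun y => F (p.1, y)) p.2 := by
  set L : Set X := (↑) '' (φ.symm '' K)
  have hL : IsClosed L := ((hK.image φ.symm.continuous).image continuous_subtype_val).isClosed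
  refine continuous_iff_continuousAt.2 fun ⟨t, x⟩ => ?_
  by_cases hx : x ∈ U
  · lift x to U using hx
    have hemb : IsOpenEmbedding (Prod.map id (↑) : Z × U → Z × X) :=
      IsOpenEmbedding.id.prodMap hU.isOpenEmbedding_subtypeVal
    refine (hemb.continuousAt_iff (x := (t, x))).1 (Continuous.continuousAt ?_)
    simp only [Function.comp_def, Prod.map_fst, Prod.map_snd, id, chartExtend_coe]
    fun_prop
  · have hxL : x ∉ L := fun h => hx (image_subset_iff.2 (fun y _ => y.2) h)
    refine continuousAt_snd.congr ?_
    filter_upwards [(hL.isOpen_compl.preimage continuous_snd).mem_nhds hxL]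
      with ⟨s, z⟩ (hz : z ∉ L)
    by_cases hzU : z ∈ U
    · lift z to U using hzU
      have hzK : φ z ∉ K := fun hzK => hz ⟨_, mem_image_of_mem _ hzK, by simp⟩
      simp only [chartExtend_coe, hFK s _ hzK, Homeomorph.symm_apply_apply]
    · exact (chartExtend_of_notMem φ _ hzU).symm

theorem continuous_chartExtend (hU : IsOpen U) {f : Y → Y} (hf : Continuous f) {K : Set Y}
    (hK : IsCompact K) (hfK : ∀ y ∉ K, f y = y) : Continuous (chartExtend φ f : X → X) :=
  (continuous_chartExtend_param φ (F := fun p : Unit × Y => f p.2) hU (hf.comp continuous_snd)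
    hK fun _ => hfK).comp (continuous_const.prodMk continuous_id : Continuous fun x : X => ((), x))

noncomputable def Homeomorph.chartExtend (hU : IsOpen U) (e : Y ≃ₜ Y) {K : Set Y}
    (hK : IsCompact K) (he : ∀ y ∉ K, e y = y) : X ≃ₜ X where
  toFun := _root_.chartExtend φ e
  invFun := _root_.chartExtend φ e.symm
  left_inv x := by
    rw [← Function.comp_apply (f := _root_.chartExtend φ e.symm), chartExtend_comp,
      e.symm_comp_self, chartExtend_id, id]
  right_inv x := by
    rw [← Function.comp_apply (f := _root_.chartExtend φ e), chartExtend_comp,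
      e.self_comp_symm, chartExtend_id, id]
  continuous_toFun := continuous_chartExtend φ hU e.continuous hK he
  continuous_invFun := continuous_chartExtend φ hU e.symm.continuous hK fun y hy => by
    conv_lhs => rw [← he y hy, e.symm_apply_apply]

@[simp]
theorem Homeomorph.coe_chartExtend (hU : IsOpen U) (e : Y ≃ₜ Y) {K : Set Y} (hK : IsCompact K)
    (he : ∀ y ∉ K, e y = y) : ⇑(Homeomorph.chartExtend φ hU e hK he) = _root_.chartExtend φ e :=
  rfl

end ChartExtend

theorem exists_homeomorph_add_of_lipschitzWith {𝕜 E : Type*} [NontriviallyNormedField 𝕜]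
    [NormedAddCommGroup E] [NormedSpace 𝕜 E] [CompleteSpace E] {g : E → E} {c : ℝ≥0}
    (hg : LipschitzWith c g) (hc : c < 1) : ∃ e : E ≃ₜ E, ⇑e = fun y => y + g y := by
  have happrox : ApproximatesLinearOn (fun y => y + g y)
      ((ContinuousLinearEquiv.refl 𝕜 E : E →L[𝕜] E)) univ c := by
    intro x _ y _
    simpa [add_sub_add_comm, dist_eq_norm] using hg.dist_le_mul x y
  have hc' : Subsingleton E ∨
      c < ‖((ContinuousLinearEquiv.refl 𝕜 E).symm : E →L[𝕜] E)‖₊⁻¹ := by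
    rcases subsingleton_or_nontrivial E with hE | hE
    · exact Or.inl hE
    · right
      simpa [ContinuousLinearMap.nnnorm_id] using hc
  exact ⟨happrox.toHomeomorph _ hc', rfl⟩

section ChartIsotopy

variable {X E : Type*} [TopologicalSpace X] [T2Space X] [NormedAddCommGroup E] [NormedSpace ℝ E]
  [CompleteSpace E] {U : Set X}

/-- The isotopy is `t ↦ id + t • g`, transported through the chart. -/
theorem exists_isotopicToId_chartExtend_add (hU : IsOpen U) (φ : U ≃ₜ E) {g : E → E} {c : ℝ≥0}
    (hg : LipschitzWith c g) (hc : c < 1) (hgK : HasCompactSupport g) :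
    ∃ h : X ≃ₜ X, IsotopicToId h ∧ ∀ w : E, h (φ.symm w) = φ.symm (w + g w) := by
  have hslice : ∀ t : I, ∃ e : E ≃ₜ E, ⇑e = fun y => y + (t : ℝ) • g y := fun t =>
    exists_homeomorph_add_of_lipschitzWith (𝕜 := ℝ)
      (((lipschitzWith_smul (t : ℝ)).comp hg).weaken (mul_le_of_le_one_left bot_le (by
        rw [← NNReal.coe_le_coe, coe_nnnorm, Real.norm_of_nonneg t.2.1]
        exact t.2.2))) hc
  choose e he using hslice
  have hfix : ∀ t y, y ∉ tsupport g → e t y = y := fun t y hy => by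
    simp [he, image_eq_zero_of_notMem_tsupport hy]
  have he₀ : ⇑(e 0) = id := funext fun y => by simp [he]
  refine ⟨Homeomorph.chartExtend φ hU (e 1) hgK.isCompact (hfix 1),
    ⟨fun p => chartExtend φ (e p.1) p.2, ?_,
      fun t => ⟨_, Homeomorph.coe_chartExtend φ hU _ hgK.isCompact (hfix t)⟩,
      fun x => by simp only [he₀, chartExtend_id, id], fun x => rfl⟩,
    fun w => by simp [he]⟩
  exact continuous_chartExtend_param φ hU (F := fun p : I × E => e p.1 p.2)
    (by simp only [he]; have := hg.continuous; fun_prop) hgK.isCompact fun t => hfix t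

end ChartIsotopy

section RadialCutoff

variable {E : Type*} [SeminormedAddCommGroup E]

noncomputable def radialCutoff (w : E) : ℝ := min 1 (max 0 ((3 - ‖w‖) / 2))

theorem radialCutoff_of_norm_le_one {w : E} (hw : ‖w‖ ≤ 1) : radialCutoff w = 1 := by
  rw [radialCutoff, max_eq_right (by linarith), min_eq_left (by linarith)]

theorem radialCutoff_of_three_le_norm {w : E} (hw : 3 ≤ ‖w‖) : radialCutoff w = 0 := by
  rw [radialCutoff, max_eq_left (by linarith), min_eq_right zero_le_one]

theorem abs_radialCutoff_le_one (w : E) : |radialCutoff w| ≤ 1 := by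
  rw [abs_le]
  exact ⟨(neg_nonpos.2 zero_le_one).trans (le_min zero_le_one (le_max_left _ _)), min_le_left _ _⟩

theorem lipschitzWith_radialCutoff : LipschitzWith (1 / 2) (radialCutoff : E → ℝ) := by
  have hlin : LipschitzWith (1 / 2) fun w : E => (3 - ‖w‖) / 2 :=
    LipschitzWith.of_dist_le_mul fun x y => by
      rw [Real.dist_eq, show (3 - ‖x‖) / 2 - (3 - ‖y‖) / 2 = -(‖x‖ - ‖y‖) / 2 by ring, abs_div,
        abs_neg, abs_two]
      push_cast
      linarith [abs_norm_sub_norm_le x y, dist_eq_norm x y]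
  exact (hlin.const_max 0).const_min 1

theorem hasCompactSupport_radialCutoff [ProperSpace E] :
    HasCompactSupport (radialCutoff : E → ℝ) :=
  HasCompactSupport.intro (isCompact_closedBall 0 3) fun w hw => radialCutoff_of_three_le_norm
    (le_of_lt (by simpa using hw))

end RadialCutoff

section LipschitzSmul

variable {E : Type*} [SeminormedAddCommGroup E] [NormedSpace ℝ E]

theorem LipschitzWith.smul_const {α : Type*} [PseudoMetricSpace α] {f : α → ℝ} {K : ℝ≥0}
    (hf : LipschitzWith K f) (v : E) : LipschitzWith (K * ‖v‖₊) fun a => f a • v :=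
  LipschitzWith.of_dist_le_mul fun a b => by
    rw [dist_eq_norm, ← sub_smul, norm_smul, NNReal.coe_mul, coe_nnnorm, mul_right_comm]
    exact mul_le_mul_of_nonneg_right (hf.dist_le_mul a b) (norm_nonneg v)

theorem LipschitzWith.smul_self {f : E → ℝ} {K B R : ℝ≥0} (hf : LipschitzWith K f)
    (hfB : ∀ w, |f w| ≤ B) (hfR : ∀ w, R < ‖w‖ → f w = 0) :
    LipschitzWith (B + K * R) fun w => f w • w := by
  refine LipschitzWith.of_dist_le_mul fun x y => ?_
  wlog hyx : ‖y‖ ≤ ‖x‖ generalizing x y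
  · rw [dist_comm, dist_comm x]
    exact this y x (le_of_not_ge hyx)
  rcases le_or_gt ‖y‖ R with hyR | hyR
  · have hsplit : f x • x - f y • y = f x • (x - y) + (f x - f y) • y := by
      rw [smul_sub, sub_smul]; abel
    calc dist (f x • x) (f y • y) ≤ |f x| * ‖x - y‖ + |f x - f y| * ‖y‖ := by
          rw [dist_eq_norm, hsplit]
          refine (norm_add_le _ _).trans_eq ?_
          rw [norm_smul, norm_smul, Real.norm_eq_abs, Real.norm_eq_abs]
      _ ≤ B * dist x y + K * dist x y * R := by
          rw [← dist_eq_norm, ← Real.dist_eq]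
          gcongr
          · exact hfB x
          · exact hf.dist_le_mul x y
      _ = (B + K * R : ℝ≥0) * dist x y := by push_cast; ring
  · rw [hfR x (hyR.trans_le hyx), hfR y hyR, zero_smul, zero_smul, dist_self]
    positivity

end LipschitzSmul

section LocalMoves

variable {E : Type*} [NormedAddCommGroup E] [NormedSpace ℝ E] [ProperSpace E]
  {X : Type*} [TopologicalSpace X] [T2Space X] {U : Set X}

theorem exists_isotopicToId_translate (hU : IsOpen U) (φ : U ≃ₜ E) {v : E} (hv : ‖v‖ ≤ 1) :
    ∃ h : X ≃ₜ X, IsotopicToId h ∧ ∀ w, ‖w‖ ≤ 1 → h (φ.symm w) = φ.symm (w + v) := by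
  have hlt : 1 / 2 * ‖v‖₊ < 1 := by
    rw [← NNReal.coe_lt_coe]
    push_cast
    linarith
  obtain ⟨h, hI, hh⟩ := exists_isotopicToId_chartExtend_add hU φ
    (lipschitzWith_radialCutoff.smul_const v) hlt
    (hasCompactSupport_radialCutoff.smul_right (f' := fun _ => v))
  exact ⟨h, hI, fun w hw => by rw [hh, radialCutoff_of_norm_le_one hw, one_smul]⟩

theorem exists_isotopicToId_expand (hU : IsOpen U) (φ : U ≃ₜ E) :
    ∃ h : X ≃ₜ X, IsotopicToId h ∧
      ∀ w, ‖w‖ ≤ 1 → h (φ.symm w) = φ.symm ((6 / 5 : ℝ) • w) := by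
  have hlip : LipschitzWith (1 + 1 / 2 * 3) fun w : E => radialCutoff w • w :=
    lipschitzWith_radialCutoff.smul_self (by exact_mod_cast abs_radialCutoff_le_one)
      fun w hw => radialCutoff_of_three_le_norm (by exact_mod_cast hw.le)
  have hlt : ‖(1 / 5 : ℝ)‖₊ * (1 + 1 / 2 * 3) < 1 := by
    rw [← NNReal.coe_lt_coe]
    push_cast
    norm_num
  obtain ⟨h, hI, hh⟩ := exists_isotopicToId_chartExtend_add hU φ
    ((lipschitzWith_smul (1 / 5 : ℝ)).comp hlip) hlt
    ((hasCompactSupport_radialCutoff.smul_right (f' := id)).smul_left (f := fun _ => (1 / 5 : ℝ)))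
  refine ⟨h, hI, fun w hw => ?_⟩
  rw [hh]
  simp only [Function.comp_apply, radialCutoff_of_norm_le_one hw, one_smul]
  congr 2
  module

end LocalMoves

theorem Antitone.holds_one_of_expanding {Q : ℝ → Prop} (hQ : Antitone Q) {c ε : ℝ} (hc : 1 < c)
    (hε : 0 < ε) (hQε : Q ε) (hstep : ∀ r ≤ 1, Q r → Q (c * r)) : Q 1 := by
  have hiter : ∀ k : ℕ, Q (min 1 (ε * c ^ k)) := by
    intro k
    induction k with
    | zero => simpa using hQ (min_le_right 1 ε) hQε
    | succ k ih =>
      refine hQ ?_ (hstep _ (min_le_left _ _) ih)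
      rw [mul_min_of_nonneg _ _ (by linarith), mul_one, pow_succ]
      exact min_le_min hc.le (le_of_eq (by ring))
  obtain ⟨k, hk⟩ := pow_unbounded_of_one_lt (1 / ε) hc
  have hk' : 1 ≤ ε * c ^ k := by
    rw [div_lt_iff₀' hε] at hk
    exact hk.le
  simpa [min_eq_left hk'] using hiter k

section ChartBall

variable {E : Type*} [NormedAddCommGroup E] {X : Type*} [TopologicalSpace X] {U : Set X}

def chartBall (φ : U ≃ₜ E) (r : ℝ) : Set X := (fun w => (φ.symm w : X)) '' ball 0 r

theorem isOpen_chartBall (hU : IsOpen U) (φ : U ≃ₜ E) (r : ℝ) : IsOpen (chartBall φ r) :=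
  (hU.isOpenMap_subtype_val.comp φ.symm.isOpenMap) _ isOpen_ball

theorem mem_chartBall_of_apply_eq_zero (φ : U ≃ₜ E) {x : X} (hx : x ∈ U) (hφ : φ ⟨x, hx⟩ = 0)
    {r : ℝ} (hr : 0 < r) : x ∈ chartBall φ r :=
  ⟨0, mem_ball_self hr, by rw [← hφ]; simp⟩

theorem exists_homeomorph_apply_eq_zero (φ : U ≃ₜ E) {x : X} (hx : x ∈ U) :
    ∃ ψ : U ≃ₜ E, ψ ⟨x, hx⟩ = 0 :=
  ⟨φ.trans (Homeomorph.subRight (φ ⟨x, hx⟩)), by simp⟩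

end ChartBall

section Filling

variable {E : Type*} [NormedAddCommGroup E] [NormedSpace ℝ E] [ProperSpace E]
  {X : Type*} [TopologicalSpace X] [T2Space X] {U : Set X}

theorem exists_isotopicToId_apply_eq [PreconnectedSpace X]
    (hchart : ∀ x : X, ∃ U : Set X, x ∈ U ∧ IsOpen U ∧ Nonempty (U ≃ₜ E)) (p q : X) :
    ∃ h : X ≃ₜ X, IsotopicToId h ∧ h p = q := by
  refine PreconnectedSpace.induction₂' (fun p q => ∃ h : X ≃ₜ X, IsotopicToId h ∧ h p = q)
    (fun x => ?_)
    ⟨fun _ _ _ ⟨h₁, H₁, e₁⟩ ⟨h₂, H₂, e₂⟩ => ⟨h₁.trans h₂, H₁.trans H₂, by simp [e₁, e₂]⟩⟩ p q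
  obtain ⟨U, hx, hU, ⟨φ⟩⟩ := hchart x
  obtain ⟨ψ, hψ⟩ := exists_homeomorph_apply_eq_zero φ hx
  have hx' : (ψ.symm 0 : X) = x := by rw [← hψ, Homeomorph.symm_apply_apply]
  filter_upwards [(isOpen_chartBall hU ψ 1).mem_nhds
    (mem_chartBall_of_apply_eq_zero ψ hx hψ one_pos)]
  rintro _ ⟨z, hz, rfl⟩
  have hz' : ‖z‖ ≤ 1 := (mem_ball_zero_iff.1 hz).le
  obtain ⟨h₁, H₁, e₁⟩ := exists_isotopicToId_translate hU ψ hz'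
  obtain ⟨h₂, H₂, e₂⟩ := exists_isotopicToId_translate hU ψ (v := -z) (by simpa using hz')
  exact ⟨⟨h₁, H₁, by simpa [hx'] using e₁ 0 (by simp)⟩, ⟨h₂, H₂, by simpa [hx'] using e₂ z hz'⟩⟩

theorem exists_isotopicToId_chartBall_subset_image (hU : IsOpen U) (φ : U ≃ₜ E) {x : X}
    (hx : x ∈ U) (hφ : φ ⟨x, hx⟩ = 0) {W : Set X} (hW : IsOpen W) (hxW : x ∈ W) :
    ∃ h : X ≃ₜ X, IsotopicToId h ∧ chartBall φ 1 ⊆ h '' W := by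
  set Q : ℝ → Prop := fun r => ∃ h : X ≃ₜ X, IsotopicToId h ∧ chartBall φ r ⊆ h '' W
  have hQ : Antitone Q := fun r s hrs ⟨h, H, hsub⟩ =>
    ⟨h, H, (image_mono (ball_subset_ball hrs)).trans hsub⟩
  obtain ⟨ε, hε, hball⟩ := Metric.isOpen_iff.1
    (hW.preimage (continuous_subtype_val.comp φ.symm.continuous)) 0
    (by simpa [← hφ] using hxW)
  refine hQ.holds_one_of_expanding (c := 6 / 5) (by norm_num) hε
    ⟨Homeomorph.refl X, IsotopicToId.refl, (image_subset_iff.2 hball).trans (by simp)⟩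
    fun r hr ⟨h, H, hsub⟩ => ?_
  obtain ⟨s, S, hs⟩ := exists_isotopicToId_expand hU φ
  refine ⟨h.trans s, H.trans S, ?_⟩
  rintro _ ⟨u, hu, rfl⟩
  have hw : ‖(5 / 6 : ℝ) • u‖ < r := by
    rw [mem_ball_zero_iff] at hu
    rw [norm_smul, Real.norm_of_nonneg (by norm_num)]
    linarith
  obtain ⟨y, hyW, hy⟩ := hsub ⟨_, mem_ball_zero_iff.2 hw, rfl⟩
  refine ⟨y, hyW, ?_⟩
  rw [Homeomorph.trans_apply, hy, hs _ (hw.le.trans hr), smul_smul]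
  norm_num

end Filling

theorem closed_manifold_finite_filling_general
    {M : Type*} [TopologicalSpace M] [CompactSpace M] [TopologicalSpace.MetrizableSpace M]
    [ConnectedSpace M] (n : ℕ)
    (hchart : ∀ x : M, ∃ U : Set M, x ∈ U ∧ IsOpen U ∧ Nonempty (U ≃ₜ (Fin n → ℝ))) :
    ∃ N : ℕ, ∀ V : Set M, IsOpen V → V.Nonempty →
      ∃ h : Fin N → M ≃ₜ M, (∀ i, IsotopicToId (h i)) ∧ (⋃ i, h i '' V) = univ := by
  have hcentered : ∀ x : M, ∃ U : Set M, ∃ hx : x ∈ U, IsOpen U ∧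
      ∃ φ : U ≃ₜ (Fin n → ℝ), φ ⟨x, hx⟩ = 0 := fun x => by
    obtain ⟨U, hx, hU, ⟨φ⟩⟩ := hchart x
    exact ⟨U, hx, hU, exists_homeomorph_apply_eq_zero φ hx⟩
  choose U hxU hU φ hφ using hcentered
  obtain ⟨s, hs⟩ := isCompact_univ.elim_finite_subcover (fun x => chartBall (φ x) 1)
    (fun x => isOpen_chartBall (hU x) _ _)
    (fun x _ => mem_iUnion.2 ⟨x, mem_chartBall_of_apply_eq_zero _ _ (hφ x) one_pos⟩)
  refine ⟨s.card, fun V hV ⟨v, hv⟩ => ?_⟩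
  have hfill : ∀ x, ∃ h : M ≃ₜ M, IsotopicToId h ∧ chartBall (φ x) 1 ⊆ h '' V := fun x => by
    obtain ⟨h₀, H₀, hv₀⟩ := exists_isotopicToId_apply_eq hchart v x
    obtain ⟨h, H, hsub⟩ := exists_isotopicToId_chartBall_subset_image (hU x) (φ x) (hxU x) (hφ x)
      (h₀.isOpenMap V hV) ⟨v, hv, hv₀⟩
    rw [← image_comp] at hsub
    exact ⟨h₀.trans h, H₀.trans H, hsub⟩
  choose h H hsub using hfill
  refine ⟨fun i => h (s.equivFin.symm i), fun i => H _, eq_univ_of_forall fun y => ?_⟩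
  obtain ⟨x, hx, hy⟩ := mem_iUnion₂.1 (hs (mem_univ y))
  exact mem_iUnion.2 ⟨s.equivFin ⟨x, hx⟩, by simpa using hsub x hy⟩

/-- **Finite filling for closed manifolds.**  For a nonempty connected closed topological
`n`-manifold `M`, there is `N ∈ ℕ` such that every nonempty open `V ⊆ M` has `N` images
under homeomorphisms isotopic to the identity which cover `M`; i.e. the action of
`H₀(M) ↷ M` has the finite filling property. -/
theorem closed_manifold_finite_filling
    {M : Type*} [TopologicalSpace M] [CompactSpace M] [TopologicalSpace.MetrizableSpace M]
    [ConnectedSpace M] [Nonempty M] (n : ℕ)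
    (hchart : ∀ x : M, ∃ U : Set M, x ∈ U ∧ IsOpen U ∧ Nonempty (U ≃ₜ (Fin n → ℝ))) :
    ∃ N : ℕ, ∀ V : Set M, IsOpen V → V.Nonempty →
      ∃ h : Fin N → M ≃ₜ M, (∀ i, IsotopicToId (h i)) ∧ (⋃ i, h i '' V) = univ :=
  closed_manifold_finite_filling_general n hchart
end

section
/- Let n ∈ ℕ, let V ⊆ ℝⁿ be an open set containing 0, and let K ⊆ ℝⁿ be compact. Then there exist a compact set C ⊆ ℝⁿ and a homeomorphism ψ : ℝⁿ → ℝⁿ with ψ(x) = x for all x ∉ C, K ⊆ ψ(V), and ψ isotopic to the identity through homeomorphisms supported in C: there is a continuous map F : [0,1]×ℝⁿ → ℝⁿ such that each F(t,·) is a homeomorphism of ℝⁿ equal to the identity outside C, F(0,·) = id, and F(1,·) = ψ. -/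
/-!
`V` contains a ball `B(0, ε)` and `K` lies in a ball `B(0, R)`. A radial map `x ↦ s(‖x‖) • x`
whose radial profile `r ↦ s(r) * r` is strictly increasing on `[0, ∞)`, with `s = 1` beyond some
radius, is a homeomorphism supported in a ball. Taking the profile to stretch
`[0, ε]` over `[0, R]` and to be the identity beyond `2R` gives `ψ`; shrinking the parameter `2R`
linearly to `0` deforms `ψ` to the identity through such maps.
-/

open Set Topology unitInterval
open Filter Function Metric

theorem isHomeomorph_of_bijective_of_eq_self_off_compact {X : Type*} [TopologicalSpace X]
    [T2Space X] [CompactlyCoherentSpace X] {f : X → X} {C : Set X} (hC : IsCompact C)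
    (hf : Continuous f) (hbij : Bijective f) (hfC : ∀ x ∉ C, f x = x) : IsHomeomorph f := by
  have hproper : IsProperMap f := by
    refine isProperMap_iff_tendsto_cocompact.mpr ⟨hf, tendsto_id.congr' ?_⟩
    filter_upwards [hC.compl_mem_cocompact] with x hx using (hfC x hx).symm
  exact isHomeomorph_iff_continuous_isClosedMap_bijective.mpr ⟨hf, hproper.isClosedMap, hbij⟩

section Radial

variable {E : Type*} [NormedAddCommGroup E] [NormedSpace ℝ E] {s : ℝ → ℝ}

def radialMap (s : ℝ → ℝ) (x : E) : E := s ‖x‖ • x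

theorem norm_radialMap (hs : ∀ r, 0 ≤ s r) (x : E) : ‖radialMap s x‖ = s ‖x‖ * ‖x‖ := by
  rw [radialMap, norm_smul, Real.norm_of_nonneg (hs _)]

theorem continuous_radialMap (hs : Continuous s) : Continuous (radialMap s : E → E) :=
  (hs.comp continuous_norm).smul continuous_id

theorem radialMap_eq_self {L : ℝ} (hL : ∀ r, L ≤ r → s r = 1) {x : E}
    (hx : x ∉ closedBall 0 L) : radialMap s x = x := by
  rw [mem_closedBall_zero_iff, not_le] at hx
  rw [radialMap, hL _ hx.le, one_smul]

theorem radialMap_injective (hs : ∀ r, 0 < s r)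
    (hmono : StrictMonoOn (fun r => s r * r) (Ici 0)) : Injective (radialMap s : E → E) := by
  intro x y hxy
  have hnorm : ‖x‖ = ‖y‖ := hmono.injOn (norm_nonneg x) (norm_nonneg y) <| by
    simpa only [norm_radialMap fun r => (hs r).le] using congrArg norm hxy
  rw [radialMap, radialMap, hnorm] at hxy
  exact smul_right_injective E (hs _).ne' hxy

theorem exists_radialMap_eq_of_norm_lt (hs : Continuous s) {b : ℝ} (hb : 0 ≤ b) {y : E}
    (hy : ‖y‖ < s b * b) : ∃ x, ‖x‖ < b ∧ radialMap s x = y := by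
  have hcont : ContinuousOn (fun r => s r * r) (Icc 0 b) := (hs.mul continuous_id).continuousOn
  obtain ⟨r, ⟨hr0, hrb⟩, hr⟩ :=
    intermediate_value_Ico hb hcont (by simpa using ⟨norm_nonneg y, hy⟩)
  rcases eq_or_ne y 0 with rfl | hy0
  · exact ⟨0, by simpa using hr0.trans_lt hrb, by simp [radialMap]⟩
  have hy' : 0 < ‖y‖ := norm_pos_iff.mpr hy0
  have hnorm : ‖(r / ‖y‖) • y‖ = r := by
    rw [norm_smul, Real.norm_of_nonneg (by positivity), div_mul_cancel₀ _ hy'.ne']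
  refine ⟨(r / ‖y‖) • y, hnorm.trans_lt hrb, ?_⟩
  beta_reduce at hr
  rw [radialMap, hnorm, smul_smul, ← mul_div_assoc, hr, div_self hy'.ne', one_smul]

theorem radialMap_surjective (hs : Continuous s) {L : ℝ} (hL : ∀ r, L ≤ r → s r = 1) :
    Surjective (radialMap s : E → E) := by
  intro y
  have hyb : ‖y‖ < max L (‖y‖ + 1) := (lt_add_one _).trans_le (le_max_right _ _)
  obtain ⟨x, -, hx⟩ := exists_radialMap_eq_of_norm_lt hs ((norm_nonneg y).trans hyb.le)
    (by rwa [hL _ (le_max_left _ _), one_mul])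
  exact ⟨x, hx⟩

theorem isHomeomorph_radialMap [ProperSpace E] (hs : Continuous s) (hpos : ∀ r, 0 < s r)
    (hmono : StrictMonoOn (fun r => s r * r) (Ici 0)) {L : ℝ} (hL : ∀ r, L ≤ r → s r = 1) :
    IsHomeomorph (radialMap s : E → E) :=
  isHomeomorph_of_bijective_of_eq_self_off_compact (isCompact_closedBall 0 L)
    (continuous_radialMap hs) ⟨radialMap_injective hpos hmono, radialMap_surjective hs hL⟩
    (fun _ hx => radialMap_eq_self hL hx)

end Radial

theorem div_max_eq_min_div {r ε : ℝ} (hε : 0 < ε) :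
    r / max r ε = min (r / ε) 1 := by
  rcases le_total r ε with h | h
  · rw [max_eq_right h, min_eq_left ((div_le_one hε).mpr h)]
  · rw [max_eq_left h, div_self (hε.trans_le h).ne', min_eq_right ((one_le_div hε).mpr h)]

/-- On the ball of radius `ε`, `radialMap (engulfingProfile ε L)` is the dilation by
`(1 + L / ε) / 2`, onto the ball of radius `(ε + L) / 2`; beyond radius `L` it is the identity,
and for `L = 0` it is the identity everywhere. -/
noncomputable def engulfingProfile (ε L r : ℝ) : ℝ := max 1 ((1 + L / max r ε) / 2)

section Profile

variable {ε L : ℝ}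

theorem engulfingProfile_pos (r : ℝ) : 0 < engulfingProfile ε L r :=
  one_pos.trans_le (le_max_left _ _)

theorem continuous_engulfingProfile (hε : 0 < ε) :
    Continuous fun p : ℝ × ℝ => engulfingProfile ε p.1 p.2 :=
  continuous_const.max <| (continuous_const.add <| continuous_fst.div
    (continuous_snd.max continuous_const) fun _ => (hε.trans_le (le_max_right _ _)).ne').div_const _

theorem engulfingProfile_eq_one (hε : 0 < ε) {r : ℝ} (hr : L ≤ r) :
    engulfingProfile ε L r = 1 := by
  have hpos : 0 < max r ε := hε.trans_le (le_max_right _ _)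
  have : L / max r ε ≤ 1 := (div_le_one hpos).mpr (hr.trans (le_max_left _ _))
  exact max_eq_left (by linarith)

theorem engulfingProfile_zero (r : ℝ) : engulfingProfile ε 0 r = 1 := by
  norm_num [engulfingProfile]

theorem engulfingProfile_mul_self (hε : 0 < ε) :
    engulfingProfile ε L ε * ε = max ε ((ε + L) / 2) := by
  rw [engulfingProfile, max_self, max_mul_of_nonneg _ _ hε.le]
  congr 1
  · ring
  · field_simp

theorem engulfingProfile_mul_eq (hε : 0 < ε) {r : ℝ} (hr : 0 ≤ r) :
    engulfingProfile ε L r * r = max r ((r + L * min (r / ε) 1) / 2) := by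
  rw [engulfingProfile, max_mul_of_nonneg _ _ hr, one_mul, ← div_max_eq_min_div hε]
  congr 1
  ring

theorem strictMonoOn_engulfingProfile_mul (hε : 0 < ε) (hL : 0 ≤ L) :
    StrictMonoOn (fun r => engulfingProfile ε L r * r) (Ici 0) := by
  intro a ha b hb hab
  simp only [engulfingProfile_mul_eq hε ha, engulfingProfile_mul_eq hε hb]
  have : min (a / ε) 1 ≤ min (b / ε) 1 := min_le_min_right _ (by gcongr)
  exact max_lt_max hab (by nlinarith)

end Profile

/-- **Engulfing in ℝⁿ.**  For an open `V ∋ 0` and compact `K` in `ℝⁿ`, there is a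
homeomorphism `ψ` of `ℝⁿ`, equal to the identity outside some compact set `C`, with
`K ⊆ ψ(V)`, and `ψ` is isotopic to the identity through homeomorphisms supported in `C`. -/
theorem euclidean_engulfing
    (n : ℕ) (V : Set (Fin n → ℝ)) (hV : IsOpen V) (h0 : (0 : Fin n → ℝ) ∈ V)
    (K : Set (Fin n → ℝ)) (hK : IsCompact K) :
    ∃ C : Set (Fin n → ℝ), IsCompact C ∧
      ∃ ψ : (Fin n → ℝ) ≃ₜ (Fin n → ℝ),
        (∀ x ∉ C, ψ x = x) ∧ K ⊆ ψ '' V ∧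
        ∃ F : I × (Fin n → ℝ) → (Fin n → ℝ), Continuous F ∧
          (∀ t : I, (∃ e : (Fin n → ℝ) ≃ₜ (Fin n → ℝ),
              (⇑e : (Fin n → ℝ) → (Fin n → ℝ)) = fun x => F (t, x)) ∧
            ∀ x ∉ C, F (t, x) = x) ∧
          (∀ x, F (0, x) = x) ∧ (∀ x, F (1, x) = ψ x) := by
  obtain ⟨ε, hε, hεV⟩ := Metric.isOpen_iff.mp hV 0 h0
  obtain ⟨R, hR, hKR⟩ := hK.isBounded.subset_ball_lt 0 0
  set s : I → ℝ → ℝ := fun t => engulfingProfile ε (t * (2 * R))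
  have hs_one : ∀ t : I, ∀ r, 2 * R ≤ r → s t r = 1 := fun t r hr =>
    engulfingProfile_eq_one hε ((mul_le_of_le_one_left (by positivity) t.2.2).trans hr)
  have hs_cont : ∀ t : I, Continuous (s t) := fun t =>
    (continuous_engulfingProfile hε).comp (Continuous.prodMk_right _)
  have hhomeo : ∀ t : I, IsHomeomorph (radialMap (s t) : (Fin n → ℝ) → Fin n → ℝ) := fun t =>
    isHomeomorph_radialMap (hs_cont t) engulfingProfile_pos
      (strictMonoOn_engulfingProfile_mul hε (mul_nonneg t.2.1 (by positivity))) (hs_one t)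
  refine ⟨closedBall 0 (2 * R), isCompact_closedBall _ _, (hhomeo 1).homeomorph _,
    fun x hx => radialMap_eq_self (hs_one 1) hx, ?_, fun p => radialMap (s p.1) p.2, ?_,
    fun t => ⟨⟨(hhomeo t).homeomorph _, rfl⟩, fun x hx => radialMap_eq_self (hs_one t) hx⟩,
    fun x => by simp [s, radialMap, engulfingProfile_zero], fun x => rfl⟩
  · intro y hy
    have hyε : ‖y‖ < s 1 ε * ε := by
      rw [show s 1 = engulfingProfile ε (2 * R) by simp [s], engulfingProfile_mul_self hε]
      have := mem_ball_zero_iff.mp (hKR hy)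
      exact lt_max_of_lt_right (by linarith)
    obtain ⟨x, hxε, hx⟩ := exists_radialMap_eq_of_norm_lt (hs_cont 1) hε.le hyε
    exact ⟨x, hεV (mem_ball_zero_iff.mpr hxε), hx⟩
  · exact (((continuous_engulfingProfile hε).comp ((continuous_subtype_val.comp continuous_fst).mul
      continuous_const |>.prodMk (continuous_norm.comp continuous_snd))).smul continuous_snd)
end
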